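/- Let G be a Grothendieck category with a projective generator, let (X,Y) be a cotorsion pair of chain complexes in Ch(G), and let C be a class of objects of G. If the disk complexes D^n(C) belong to Y for every C ∈ C and every n ∈ ℤ, then every bounded below exact chain complex all of whose cycle objects lie in C also belongs to Y. -/

import Mathlib

set_option linter.unusedVariables false

open CategoryTheory CategoryTheory.Limits ZeroObject

universe v u

namespace GorensteinAC





/-! ### General notions in an abelian category -/

section AbelianNotions

variable {𝒜 : Type u} [Category.{v} 𝒜] [Abelian 𝒜]

/-- `Ext¹(X,Y) = 0`, expressed by the (Yoneda) condition that every short exact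
sequence `0 → Y → Z → X → 0` splits. -/
def Ext1IsZero (X Y : 𝒜) : Prop :=
  ∀ (Z : 𝒜) (i : Y ⟶ Z) (p : Z ⟶ X) (w : i ≫ p = 0),
    (ShortComplex.mk i p w).ShortExact → ∃ s : X ⟶ Z, s ≫ p = 𝟙 X

/-- The right `Ext¹`-orthogonal of a class of objects. -/
def rightPerp (S : Set 𝒜) : Set 𝒜 := {Y | ∀ X ∈ S, Ext1IsZero X Y}

/-- The left `Ext¹`-orthogonal of a class of objects. -/
def leftPerp (S : Set 𝒜) : Set 𝒜 := {X | ∀ Y ∈ S, Ext1IsZero X Y}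

/-- `(X, Y)` is a cotorsion pair. -/
def IsCotorsionPair (X Y : Set 𝒜) : Prop := Y = rightPerp X ∧ X = leftPerp Y

/-- `(X, Y)` is a complete cotorsion pair: it is a cotorsion pair with enough
projectives and enough injectives. -/
def IsCompleteCotorsionPair (X Y : Set 𝒜) : Prop :=
  IsCotorsionPair X Y ∧
  (∀ A : 𝒜, ∃ (Y' X' : 𝒜) (i : Y' ⟶ X') (p : X' ⟶ A) (w : i ≫ p = 0),
    (ShortComplex.mk i p w).ShortExact ∧ X' ∈ X ∧ Y' ∈ Y) ∧
  (∀ A : 𝒜, ∃ (Y' X' : 𝒜) (i : A ⟶ Y') (p : Y' ⟶ X') (w : i ≫ p = 0),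
    (ShortComplex.mk i p w).ShortExact ∧ X' ∈ X ∧ Y' ∈ Y)

/-- A class is thick if it is closed under direct summands (retracts) and satisfies
the two-out-of-three property on short exact sequences. -/
def IsThick (W : Set 𝒜) : Prop :=
  (∀ A B : 𝒜, (∃ (s : A ⟶ B) (r : B ⟶ A), s ≫ r = 𝟙 A) → B ∈ W → A ∈ W) ∧
  (∀ S : ShortComplex 𝒜, S.ShortExact →
    ((S.X₁ ∈ W → S.X₂ ∈ W → S.X₃ ∈ W) ∧ (S.X₁ ∈ W → S.X₃ ∈ W → S.X₂ ∈ W) ∧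
      (S.X₂ ∈ W → S.X₃ ∈ W → S.X₁ ∈ W)))

/-- A projective cotorsion pair: a complete cotorsion pair `(C, W)` with `W` thick
and `C ∩ W` exactly the class of projective objects. -/
def IsProjectiveCotorsionPair (C W : Set 𝒜) : Prop :=
  IsCompleteCotorsionPair C W ∧ IsThick W ∧ (C ∩ W = {P : 𝒜 | Projective P})

/-- The sphere complex `S^n(A)`: `A` concentrated in degree `n`. -/
noncomputable def sphere (n : ℤ) (A : 𝒜) : ChainComplex 𝒜 ℤ :=
  (HomologicalComplex.single 𝒜 (ComplexShape.down ℤ) n).obj A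

/-- The disk complex `D^n(A)`: `A` in degrees `n` and `n-1` with identity differential. -/
noncomputable def disk (n : ℤ) (A : 𝒜) : ChainComplex 𝒜 ℤ where
  X i := if i = n ∨ i = n - 1 then A else 0
  d i j :=
    if h : i = n ∧ j = n - 1 then
      eqToHom (by rw [if_pos (Or.inl h.1), if_pos (Or.inr h.2)])
    else 0
  shape i j hij := by
    apply dif_neg
    rintro ⟨rfl, rfl⟩
    exact hij (by simp only [ComplexShape.down_Rel]; omega)
  d_comp_d' i j k hij hjk := by
    try dsimp only
    by_cases h : i = n ∧ j = n - 1
    · rw [dif_neg (show ¬(j = n ∧ k = n - 1) by rintro ⟨rfl, -⟩; omega), comp_zero]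
    · rw [dif_neg h, zero_comp]

end AbelianNotions






section AbelianNotionsB
variable {𝒜 : Type u} [Category.{v} 𝒜] [Abelian 𝒜]

/-- The complex `𝔻` remains exact after applying the contravariant functor `Hom(-, L)`. -/
def HomIntoExact (𝔻 : ChainComplex 𝒜 ℤ) (L : 𝒜) : Prop :=
  ∀ (n : ℤ) (f : 𝔻.X n ⟶ L), 𝔻.d (n + 1) n ≫ f = 0 →
    ∃ g : 𝔻.X (n - 1) ⟶ L, f = 𝔻.d n (n - 1) ≫ g

/-- The complex `𝔻` remains exact after applying the covariant functor `Hom(A, -)`. -/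
def HomFromExact (𝔻 : ChainComplex 𝒜 ℤ) (A : 𝒜) : Prop :=
  ∀ (n : ℤ) (f : A ⟶ 𝔻.X n), f ≫ 𝔻.d n (n - 1) = 0 →
    ∃ g : A ⟶ 𝔻.X (n + 1), f = g ≫ 𝔻.d (n + 1) n

end AbelianNotionsB

abbrev Ch (R : Type) [Ring R] := ChainComplex (ModuleCat R) ℤ
abbrev DCh (R : Type) [Ring R] := ChainComplex (Ch R) ℤ

def IsTypeFPInfty {S : Type} [Ring S] (F : ModuleCat S) : Prop :=
  ∃ P : ProjectiveResolution F, ∀ n : ℕ, Module.Finite S (P.complex.X n)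

/-- A module is countably generated if it has a countable generating set. -/
def IsCountablyGenerated {S : Type} [Ring S] (M : ModuleCat S) : Prop :=
  ∃ s : Set M, s.Countable ∧ Submodule.span S s = ⊤

/-- A chain complex is countably generated iff each component is countably generated. -/
def IsCountablyGeneratedCx {S : Type} [Ring S] (X : ChainComplex (ModuleCat S) ℤ) : Prop :=
  ∀ n : ℤ, IsCountablyGenerated (X.X n)

/-- A module `M` has projective dimension at most `n` : it admits a projective
resolution vanishing above degree `n`. -/
def HasProjDimLE {S : Type} [Ring S] (M : ModuleCat S) (n : ℕ) : Prop :=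
  ∃ P : ProjectiveResolution M, ∀ k : ℕ, n < k → IsZero (P.complex.X k)

/-- A module is absolutely pure (FP-injective) if `Ext¹(F, E) = 0` for every finitely
presented module `F`. -/
def IsAbsolutelyPure {S : Type} [Ring S] (E : ModuleCat S) : Prop :=
  ∀ F : ModuleCat S, Module.FinitePresentation S F → Ext1IsZero F E

/-- A module is absolutely clean if `Ext¹(F, A) = 0` for every module `F` of type `FP_∞`. -/
def IsAbsolutelyClean {S : Type} [Ring S] (A : ModuleCat S) : Prop :=
  ∀ F : ModuleCat S, IsTypeFPInfty F → Ext1IsZero F A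

/-- `M` has absolutely pure (FP-injective) dimension at most `n` : there is an exact
sequence `0 → M → E⁰ → ⋯ → Eⁿ → 0` with each `Eⁱ` absolutely pure. -/
def HasAbsPureDimLE {S : Type} [Ring S] (M : ModuleCat S) (n : ℕ) : Prop :=
  ∃ D : CochainComplex (ModuleCat S) ℕ,
    Nonempty (D.X 0 ≅ M) ∧ (∀ i : ℕ, D.ExactAt i) ∧
      (∀ i : ℕ, 1 ≤ i → IsAbsolutelyPure (D.X i)) ∧ (∀ i : ℕ, n + 1 < i → IsZero (D.X i))

section Coherent
variable (R : Type) [Ring R]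

/-- `R` is left coherent: every finitely generated left ideal is finitely presented. -/
def IsLeftCoherent : Prop :=
  ∀ I : Ideal R, I.FG → Module.FinitePresentation R I

/-- `R` is right coherent: every finitely generated right ideal is finitely presented. -/
def IsRightCoherent : Prop :=
  ∀ I : Submodule Rᵐᵒᵖ R, I.FG → Module.FinitePresentation Rᵐᵒᵖ I

/-- A Ding-Chen ring: a two-sided coherent ring with finite self-FP-injective dimension
on both sides. -/
def IsDingChen : Prop :=
  IsLeftCoherent R ∧ IsRightCoherent R ∧
    (∃ n : ℕ, HasAbsPureDimLE (ModuleCat.of R R) n) ∧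
    ∃ n : ℕ, HasAbsPureDimLE (ModuleCat.of Rᵐᵒᵖ Rᵐᵒᵖ) n

end Coherent

section Modules
variable {R : Type} [Ring R]

open TensorProduct in
noncomputable def ncRel (R : Type) [Ring R] (M : Type) [AddCommGroup M] [Module Rᵐᵒᵖ M]
    (N : Type) [AddCommGroup N] [Module R N] : AddSubgroup (TensorProduct ℤ M N) :=
  AddSubgroup.closure
    {z | ∃ (r : R) (m : M) (n : N),
      z = (MulOpposite.op r • m) ⊗ₜ[ℤ] n - m ⊗ₜ[ℤ] (r • n)}

def IsLevel (L : ModuleCat R) : Prop :=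
  ∀ (K P F : ModuleCat Rᵐᵒᵖ) (i : K ⟶ P) (p : P ⟶ F) (w : i ≫ p = 0),
    (ShortComplex.mk i p w).ShortExact → Projective P → IsTypeFPInfty F →
    ∀ z : TensorProduct ℤ K L,
      TensorProduct.map i.hom.toAddMonoidHom.toIntLinearMap (LinearMap.id (R := ℤ) (M := L)) z
        ∈ ncRel R P L → z ∈ ncRel R K L

/-- A module `L` is flat if for every monomorphism `K → P` of right modules, the
induced map `K ⊗_R L → P ⊗_R L` is injective. -/
def IsFlat (L : ModuleCat R) : Prop :=
  ∀ (K P : ModuleCat Rᵐᵒᵖ) (i : K ⟶ P), Mono i →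
    ∀ z : TensorProduct ℤ K L,
      TensorProduct.map i.hom.toAddMonoidHom.toIntLinearMap (LinearMap.id (R := ℤ) (M := L)) z
        ∈ ncRel R P L → z ∈ ncRel R K L

/-- `M` has flat dimension at most `n` : there is an exact sequence
`0 → Fₙ → ⋯ → F₀ → M → 0` with each `Fᵢ` flat. -/
def HasFlatDimLE (M : ModuleCat R) (n : ℕ) : Prop :=
  ∃ D : ChainComplex (ModuleCat R) ℕ,
    Nonempty (D.X 0 ≅ M) ∧ (∀ i : ℕ, D.ExactAt i) ∧
      (∀ i : ℕ, 1 ≤ i → IsFlat (D.X i)) ∧ (∀ i : ℕ, n + 1 < i → IsZero (D.X i))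

/-- A Gorenstein projective module: a cycle of an exact complex of projective modules
which remains exact under `Hom(-, Q)` for every projective module `Q`. -/
noncomputable def IsGorProjMod (M : ModuleCat R) : Prop :=
  ∃ D : ChainComplex (ModuleCat R) ℤ,
    (∀ n : ℤ, Projective (D.X n)) ∧ (∀ n : ℤ, D.ExactAt n) ∧
      (∀ Q : ModuleCat R, Projective Q → HomIntoExact D Q) ∧
      Nonempty (M ≅ kernel (D.d 0 (-1)))

/-- A Gorenstein injective module: a cycle of an exact complex of injective modules
which remains exact under `Hom(E, -)` for every injective module `E`. -/
noncomputable def IsGorInjMod (M : ModuleCat R) : Prop :=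
  ∃ D : ChainComplex (ModuleCat R) ℤ,
    (∀ n : ℤ, Injective (D.X n)) ∧ (∀ n : ℤ, D.ExactAt n) ∧
      (∀ E : ModuleCat R, Injective E → HomFromExact D E) ∧
      Nonempty (M ≅ kernel (D.d 0 (-1)))

end Modules

section Complexes
variable {R : Type} [Ring R]

def IsLevelComplex (L : Ch R) : Prop :=
  (∀ n : ℤ, L.ExactAt n) ∧ ∀ n : ℤ, IsLevel (L.cycles n)

/-- A flat chain complex: exact with all cycle modules flat. -/
def IsFlatComplex (F : Ch R) : Prop :=
  (∀ n : ℤ, F.ExactAt n) ∧ ∀ n : ℤ, IsFlat (F.cycles n)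

/-- An absolutely clean chain complex: exact with all cycle modules absolutely clean. -/
def IsAbsCleanComplex (A : Ch R) : Prop :=
  (∀ n : ℤ, A.ExactAt n) ∧ ∀ n : ℤ, IsAbsolutelyClean (A.cycles n)

def IsACAcyclicProjCx (𝔻 : DCh R) : Prop :=
  (∀ n : ℤ, Projective (𝔻.X n)) ∧ (∀ n : ℤ, 𝔻.ExactAt n) ∧
    ∀ L : Ch R, IsLevelComplex L → HomIntoExact 𝔻 L

noncomputable def IsGorACProj (X : Ch R) : Prop :=
  ∃ 𝔻 : DCh R, IsACAcyclicProjCx 𝔻 ∧ Nonempty (X ≅ kernel (𝔻.d 0 (-1)))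

/-- A Ding projective chain complex. -/
noncomputable def IsDingProjCx (X : Ch R) : Prop :=
  ∃ 𝔻 : DCh R,
    (∀ n : ℤ, Projective (𝔻.X n)) ∧ (∀ n : ℤ, 𝔻.ExactAt n) ∧
      (∀ F : Ch R, IsFlatComplex F → HomIntoExact 𝔻 F) ∧
      Nonempty (X ≅ kernel (𝔻.d 0 (-1)))

/-- A Gorenstein projective chain complex. -/
noncomputable def IsGorProjCx (X : Ch R) : Prop :=
  ∃ 𝔻 : DCh R,
    (∀ n : ℤ, Projective (𝔻.X n)) ∧ (∀ n : ℤ, 𝔻.ExactAt n) ∧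
      (∀ Q : Ch R, Projective Q → HomIntoExact 𝔻 Q) ∧
      Nonempty (X ≅ kernel (𝔻.d 0 (-1)))

/-- A Gorenstein AC-injective chain complex. -/
noncomputable def IsGorACInj (X : Ch R) : Prop :=
  ∃ 𝕀 : DCh R,
    (∀ n : ℤ, Injective (𝕀.X n)) ∧ (∀ n : ℤ, 𝕀.ExactAt n) ∧
      (∀ A : Ch R, IsAbsCleanComplex A → HomFromExact 𝕀 A) ∧
      Nonempty (X ≅ kernel (𝕀.d 0 (-1)))

/-- A Gorenstein injective chain complex. -/
noncomputable def IsGorInjCx (X : Ch R) : Prop :=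
  ∃ 𝕀 : DCh R,
    (∀ n : ℤ, Injective (𝕀.X n)) ∧ (∀ n : ℤ, 𝕀.ExactAt n) ∧
      (∀ E : Ch R, Injective E → HomFromExact 𝕀 E) ∧
      Nonempty (X ≅ kernel (𝕀.d 0 (-1)))

def chCard (X : Ch R) : Cardinal := Cardinal.mk (Σ n : ℤ, X.X n)

def dchCard (𝕏 : DCh R) : Cardinal := Cardinal.mk (Σ (n : ℤ) (k : ℤ), (𝕏.X n).X k)

end Complexes






variable {R : Type} [Ring R]

lemma mc_comp_apply {A B C : ModuleCat R} (f : A ⟶ B) (g : B ⟶ C) (x : A) :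
    (f ≫ g) x = g (f x) := rfl

lemma mc_zero_apply {A B : ModuleCat R} (x : A) : (0 : A ⟶ B) x = 0 := rfl

/-- A subcomplex of a chain complex of modules: a family of submodules preserved
by the differentials. -/
structure SubCx (X : Ch R) where
  N : ∀ n : ℤ, Submodule R (X.X n)
  d_mem : ∀ (i j : ℤ), ∀ x ∈ N i, X.d i j x ∈ N j

instance (X : Ch R) : LE (SubCx X) := ⟨fun Q Q' => ∀ n, Q.N n ≤ Q'.N n⟩

/-- A subcomplex, regarded as a chain complex in its own right. -/
noncomputable def SubCx.toCh {X : Ch R} (Q : SubCx X) : Ch R where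
  X n := ModuleCat.of R (Q.N n)
  d i j := ModuleCat.ofHom ((X.d i j).hom.restrict (Q.d_mem i j))
  shape i j h := by
    refine ModuleCat.hom_ext (LinearMap.ext fun x => Subtype.ext ?_)
    have h0 : X.d i j = 0 := X.shape i j h
    show X.d i j x.1 = _
    rw [h0]
    rfl
  d_comp_d' i j k _ _ := by
    refine ModuleCat.hom_ext (LinearMap.ext fun x => Subtype.ext ?_)
    have h0 : X.d j k (X.d i j x.1) = 0 := by
      rw [← mc_comp_apply, X.d_comp_d i j k, mc_zero_apply]
    exact h0

/-- The inclusion of a smaller subcomplex into a larger one. -/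
noncomputable def SubCx.incl {X : Ch R} {Q Q' : SubCx X} (h : Q ≤ Q') :
    Q.toCh ⟶ Q'.toCh where
  f n := ModuleCat.ofHom (Submodule.inclusion (h n))
  comm' i j _ := by
    refine ModuleCat.hom_ext (LinearMap.ext fun x => Subtype.ext ?_)
    rfl

/-- `M` is a transfinite extension (continuous union) of complexes from `S`. -/
noncomputable def IsTransfiniteExtension (S : Set (Ch R)) (M : Ch R) : Prop :=
  ∃ (lam : Ordinal.{0}) (Q : ∀ α : Ordinal, α ≤ lam → SubCx M)
    (mono : ∀ (α α' : Ordinal.{0}) (h : α ≤ α') (h' : α' ≤ lam), Q α (h.trans h') ≤ Q α' h'),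
    ((Q 0 (by simp)).toCh ∈ S) ∧
    (∀ (α : Ordinal.{0}) (h : α < lam),
      cokernel (SubCx.incl (mono α (Order.succ α) (Order.le_succ α) (Order.succ_le_of_lt h)))
        ∈ S) ∧
    (∀ (γ : Ordinal.{0}) (h : γ ≤ lam), Order.IsSuccLimit γ →
      ∀ n : ℤ, (Q γ h).N n = ⨆ (α : Ordinal.{0}) (hα : α < γ), (Q α (hα.le.trans h)).N n) ∧
    (∀ n : ℤ, (Q lam le_rfl).N n = ⊤)






variable {R : Type} [Ring R]


/-- A sub-double-complex of a double complex `𝕏`: a family of submodules preserved by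
the inner and outer differentials. -/
structure SubDCx (𝕏 : DCh R) where
  N : ∀ (n k : ℤ), Submodule R ((𝕏.X n).X k)
  d_inner_mem : ∀ (n i j : ℤ), ∀ x ∈ N n i, (𝕏.X n).d i j x ∈ N n j
  d_outer_mem : ∀ (i j k : ℤ), ∀ x ∈ N i k, (𝕏.d i j).f k x ∈ N j k

instance (𝕏 : DCh R) : LE (SubDCx 𝕏) := ⟨fun Q Q' => ∀ n k, Q.N n k ≤ Q'.N n k⟩

/-- Row `n` of a sub-double-complex, as a chain complex. -/
noncomputable def SubDCx.row {𝕏 : DCh R} (Q : SubDCx 𝕏) (n : ℤ) : Ch R where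
  X k := ModuleCat.of R (Q.N n k)
  d i j := ModuleCat.ofHom (((𝕏.X n).d i j).hom.restrict (Q.d_inner_mem n i j))
  shape i j h := by
    refine ModuleCat.hom_ext (LinearMap.ext fun x => Subtype.ext ?_)
    show (𝕏.X n).d i j x.1 = _
    rw [(𝕏.X n).shape i j h]
    rfl
  d_comp_d' i j k _ _ := by
    refine ModuleCat.hom_ext (LinearMap.ext fun x => Subtype.ext ?_)
    have h0 : (𝕏.X n).d j k ((𝕏.X n).d i j x.1) = 0 := by
      rw [← mc_comp_apply, (𝕏.X n).d_comp_d i j k, mc_zero_apply]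
    exact h0

/-- A sub-double-complex, regarded as a double complex in its own right. -/
noncomputable def SubDCx.toDCh {𝕏 : DCh R} (Q : SubDCx 𝕏) : DCh R where
  X n := Q.row n
  d i j :=
    { f := fun k => ModuleCat.ofHom (((𝕏.d i j).f k).hom.restrict (Q.d_outer_mem i j k))
      comm' := fun a b _ => by
        refine ModuleCat.hom_ext (LinearMap.ext fun x => Subtype.ext ?_)
        have h0 := LinearMap.congr_fun (congrArg ModuleCat.Hom.hom ((𝕏.d i j).comm a b)) x.1
        exact h0 }
  shape i j h := by
    have h0 : 𝕏.d i j = 0 := 𝕏.shape i j h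
    refine HomologicalComplex.hom_ext _ _ fun k => ModuleCat.hom_ext (LinearMap.ext fun x => Subtype.ext ?_)
    show (𝕏.d i j).f k x.1 = _
    rw [h0]
    rfl
  d_comp_d' i j k _ _ := by
    refine HomologicalComplex.hom_ext _ _ fun m => ModuleCat.hom_ext (LinearMap.ext fun x => Subtype.ext ?_)
    have h0 : (𝕏.d j k).f m ((𝕏.d i j).f m x.1) = 0 := by
      have hdd := 𝕏.d_comp_d i j k
      calc (𝕏.d j k).f m ((𝕏.d i j).f m x.1) = ((𝕏.d i j ≫ 𝕏.d j k).f m) x.1 := rfl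
        _ = ((0 : 𝕏.X i ⟶ 𝕏.X k).f m) x.1 := by rw [hdd]
        _ = 0 := rfl
    exact h0


variable {R : Type} [Ring R]

/-- The inclusion of a smaller sub-double-complex into a larger one. -/
noncomputable def SubDCx.incl {𝕏 : DCh R} {Q Q' : SubDCx 𝕏} (h : Q ≤ Q') :
    Q.toDCh ⟶ Q'.toDCh where
  f n :=
    { f := fun k => ModuleCat.ofHom (Submodule.inclusion (h n k))
      comm' := fun i j _ => ModuleCat.hom_ext (LinearMap.ext fun x => Subtype.ext rfl) }
  comm' := fun i j _ =>
    HomologicalComplex.hom_ext _ _ fun k => ModuleCat.hom_ext (LinearMap.ext fun x => Subtype.ext rfl)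






section HomCx
variable {𝒜 : Type u} [Category.{v} 𝒜] [Abelian 𝒜]

/-- The degree-`n` part of the Hom-complex `Hom(X, Y)`:
families of maps `X_p ⟶ Y_{p+n}`. -/
abbrev HChain (X Y : ChainComplex 𝒜 ℤ) (n : ℤ) :=
  ∀ p : ℤ, X.X p ⟶ Y.X (p + n)

/-- The differential of the Hom-complex, `(δ f)_p = d_{p+m} ∘ f_p - (-1)^m f_{p-1} ∘ d_p`. -/
noncomputable def hδ (X Y : ChainComplex 𝒜 ℤ) (m n : ℤ) : HChain X Y m →+ HChain X Y n :=
  AddMonoidHom.mk'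
    (fun f p =>
      f p ≫ Y.d (p + m) (p + n) -
        (m.negOnePow : ℤ) •
          (X.d p (p + n - m) ≫ f (p + n - m) ≫ eqToHom (congrArg Y.X (by omega))))
    (by
      intro f g
      funext p
      simp only [Pi.add_apply, Preadditive.add_comp, Preadditive.comp_add, smul_add]
      abel)

/-- The `n`-th homology of the Hom-complex `Hom(X,Y)`, presented as
(cycles)/(boundaries). -/
noncomputable def homCxHomology (X Y : ChainComplex 𝒜 ℤ) (n : ℤ) : Type v :=
  (hδ X Y n (n - 1)).ker ⧸
    ((hδ X Y (n + 1) n).range.comap (hδ X Y n (n - 1)).ker.subtype)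

noncomputable instance (X Y : ChainComplex 𝒜 ℤ) (n : ℤ) : AddCommGroup (homCxHomology X Y n) := by
  unfold homCxHomology; infer_instance

/-- The suspension `Σⁿ Y`, with `(Σⁿ Y)_k = Y_{k-n}` and differential `(-1)ⁿ d`. -/
noncomputable def shiftC (n : ℤ) (Y : ChainComplex 𝒜 ℤ) : ChainComplex 𝒜 ℤ where
  X k := Y.X (k - n)
  d i j := (n.negOnePow : ℤ) • Y.d (i - n) (j - n)
  shape i j h := by
    try dsimp only
    rw [Y.shape, smul_zero]
    simp only [ComplexShape.down_Rel] at h ⊢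
    omega
  d_comp_d' i j k _ _ := by
    rw [Preadditive.zsmul_comp, Preadditive.comp_zsmul, Y.d_comp_d, smul_zero, smul_zero]

/-- The group of chain homotopy classes of chain maps, i.e. hom-groups in the
homotopy category `K(𝒜)`. -/
noncomputable def htpyClasses (Z W : ChainComplex 𝒜 ℤ) : Type v :=
  (HomotopyCategory.quotient 𝒜 (ComplexShape.down ℤ)).obj Z ⟶
    (HomotopyCategory.quotient 𝒜 (ComplexShape.down ℤ)).obj W

noncomputable instance (Z W : ChainComplex 𝒜 ℤ) : AddCommGroup (htpyClasses Z W) := by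
  unfold htpyClasses; infer_instance

/-- A degreewise split extension of `X` by `Y`. -/
structure DWExtension (X Y : ChainComplex 𝒜 ℤ) where
  Z : ChainComplex 𝒜 ℤ
  i : Y ⟶ Z
  p : Z ⟶ X
  w : i ≫ p = 0
  shortExact : (ShortComplex.mk i p w).ShortExact
  dwSplit : ∀ k : ℤ, ∃ r : Z.X k ⟶ Y.X k, i.f k ≫ r = 𝟙 (Y.X k)

/-- Equivalence of extensions (the Yoneda equivalence relation on `Ext¹`). -/
def DWExtension.equivRel {X Y : ChainComplex 𝒜 ℤ} (E E' : DWExtension X Y) : Prop :=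
  ∃ φ : E.Z ≅ E'.Z, E.i ≫ φ.hom = E'.i ∧ φ.hom ≫ E'.p = E.p

instance dwSetoid (X Y : ChainComplex 𝒜 ℤ) : Setoid (DWExtension X Y) where
  r := DWExtension.equivRel
  iseqv := by
    constructor
    · intro E
      exact ⟨Iso.refl _, by simp, by simp⟩
    · rintro E E' ⟨φ, h1, h2⟩
      refine ⟨φ.symm, ?_, ?_⟩
      · rw [← h1]; simp
      · rw [← h2]; simp
    · rintro E E' E'' ⟨φ, h1, h2⟩ ⟨ψ, h3, h4⟩
      refine ⟨φ ≪≫ ψ, ?_, ?_⟩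
      · simp [reassoc_of% h1, h3]
      · simp [h4, h2]

/-- The pointed set of equivalence classes of degreewise split extensions of `X` by `Y`;
this is `Ext¹_dw(X, Y)`. -/
def DWExtClasses (X Y : ChainComplex 𝒜 ℤ) : Type (max u v) :=
  Quotient (dwSetoid X Y)


end HomCx

/-!
Since `disk (n + 1)` is exact and right adjoint to evaluation in degree `n`, the hypothesis on
disks gives `Ext¹(Xₙ, c) = 0` in `G` for `X ∈ XX` and `c ∈ C`. The short exact sequences
`0 → Zₙ W → Wₙ → Zₙ₋₁ W → 0` then give `Ext¹(Xₘ, Wₙ) = 0`, so an extension of `X` by `W` splits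
degreewise, and it splits as a sequence of complexes once the resulting degree `-1` cycle of
`Hom(X, W)` is null-homotopic. The null-homotopy is built upwards from the lower bound of `W`:
each step lifts a map into `Zₙ₋₁ W` along `Wₙ → Zₙ₋₁ W`, which `Ext¹(Xₙ, Zₙ W) = 0` allows.
-/

variable {𝒜 : Type u} [Category.{v} 𝒜] [Abelian 𝒜]

section Ext1

lemma shortExact_pullback {K B C T : 𝒜} {k : K ⟶ B} {e : B ⟶ C} {w : k ≫ e = 0}
    (hse : (ShortComplex.mk k e w).ShortExact) (t : T ⟶ C) :
    (ShortComplex.mk (pullback.lift k 0 (by rw [w, zero_comp]) : K ⟶ pullback e t)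
      (pullback.snd e t) (pullback.lift_snd _ _ _)).ShortExact := by
  have := hse.mono_f
  have := hse.epi_g
  have : Mono (pullback.lift k 0 (by rw [w, zero_comp]) : K ⟶ pullback e t) :=
    mono_of_mono_fac (pullback.lift_fst _ _ _)
  refine ShortComplex.ShortExact.mk' (ShortComplex.exact_of_f_is_kernel _ ?_) inferInstance
    inferInstance
  refine KernelFork.IsLimit.ofι' _ _ fun {A} a (ha : a ≫ pullback.snd e t = 0) => ?_
  have hae : (a ≫ pullback.fst e t) ≫ e = 0 := by
    rw [Category.assoc, pullback.condition, ← Category.assoc, ha, zero_comp]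
  refine ⟨hse.fIsKernel.lift (KernelFork.ofι _ hae), pullback.hom_ext ?_ ?_⟩
  · rw [Category.assoc, pullback.lift_fst]
    exact Fork.IsLimit.lift_ι hse.fIsKernel
  · rw [Category.assoc, pullback.lift_snd, comp_zero, ha]

theorem Ext1IsZero.exists_lift {A K B C : 𝒜} (hext : Ext1IsZero A K) {k : K ⟶ B} {e : B ⟶ C}
    {w : k ≫ e = 0} (hse : (ShortComplex.mk k e w).ShortExact) (u : A ⟶ C) :
    ∃ v : A ⟶ B, v ≫ e = u := by
  obtain ⟨s, hs : s ≫ pullback.snd e u = 𝟙 A⟩ := hext _ _ _ _ (shortExact_pullback hse u)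
  exact ⟨s ≫ pullback.fst e u, by rw [Category.assoc, pullback.condition, reassoc_of% hs]⟩

lemma shortExact_pushout {Y Z X C : 𝒜} {i : Y ⟶ Z} {p : Z ⟶ X} {w : i ≫ p = 0}
    (hse : (ShortComplex.mk i p w).ShortExact) (b : Y ⟶ C) :
    (ShortComplex.mk (pushout.inr i b) (pushout.desc p 0 (by rw [w, comp_zero]) : pushout i b ⟶ X)
      (pushout.inr_desc _ _ _)).ShortExact := by
  have := hse.mono_f
  have := hse.epi_g
  have : Epi (pushout.desc p 0 (by rw [w, comp_zero]) : pushout i b ⟶ X) :=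
    epi_of_epi_fac (pushout.inl_desc _ _ _)
  refine ShortComplex.ShortExact.mk' (ShortComplex.exact_of_g_is_cokernel _ ?_) inferInstance
    inferInstance
  refine CokernelCofork.IsColimit.ofπ' _ _ fun {A} a (ha : pushout.inr i b ≫ a = 0) => ?_
  have hia : i ≫ pushout.inl i b ≫ a = 0 := by
    rw [← Category.assoc, pushout.condition, Category.assoc, ha, comp_zero]
  refine ⟨hse.gIsCokernel.desc (CokernelCofork.ofπ _ hia), pushout.hom_ext ?_ ?_⟩
  · rw [← Category.assoc, pushout.inl_desc]
    exact Cofork.IsColimit.π_desc hse.gIsCokernel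
  · rw [← Category.assoc, pushout.inr_desc, zero_comp, ha]

lemma shortExact_comp_pushout_inl {A B Q Z X : 𝒜} {f : A ⟶ B} {g : B ⟶ Q} {wfg : f ≫ g = 0}
    (hS : (ShortComplex.mk f g wfg).ShortExact) {i : B ⟶ Z} {p : Z ⟶ X} {w : i ≫ p = 0}
    (hse : (ShortComplex.mk i p w).ShortExact) :
    (ShortComplex.mk (f ≫ i) (pushout.inl i g)
      (by rw [Category.assoc, pushout.condition, reassoc_of% wfg, zero_comp])).ShortExact := by
  have := hse.mono_f
  have := hS.mono_f
  have := hS.epi_g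
  refine ShortComplex.ShortExact.mk' (ShortComplex.exact_of_f_is_kernel _ ?_) inferInstance
    inferInstance
  refine KernelFork.IsLimit.ofι' _ _ fun {T} t (ht : t ≫ pushout.inl i g = 0) => ?_
  have htp : t ≫ p = 0 := by
    rw [← pushout.inl_desc (f := i) (g := g) p 0 (by rw [w, comp_zero]), reassoc_of% ht,
      zero_comp]
  let t' : T ⟶ B := hse.fIsKernel.lift (KernelFork.ofι t htp)
  have ht' : t' ≫ i = t := Fork.IsLimit.lift_ι hse.fIsKernel
  have htg : t' ≫ g = 0 := by
    rw [← cancel_mono (pushout.inr i g), Category.assoc, ← pushout.condition, reassoc_of% ht',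
      ht, zero_comp]
  let a : T ⟶ A := hS.fIsKernel.lift (KernelFork.ofι t' htg)
  have ha : a ≫ f = t' := Fork.IsLimit.lift_ι hS.fIsKernel
  exact ⟨a, by change a ≫ f ≫ i = t; rw [reassoc_of% ha, ht']⟩

theorem Ext1IsZero.of_shortExact {X A B Q : 𝒜} {f : A ⟶ B} {g : B ⟶ Q} {wfg : f ≫ g = 0}
    (hS : (ShortComplex.mk f g wfg).ShortExact) (hA : Ext1IsZero X A) (hQ : Ext1IsZero X Q) :
    Ext1IsZero X B := by
  intro Z i p w hse
  obtain ⟨s, hs⟩ := hQ _ _ _ _ (shortExact_pushout hse g)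
  obtain ⟨v, hv⟩ := hA.exists_lift (shortExact_comp_pushout_inl hS hse) s
  exact ⟨v, by
    rw [← pushout.inl_desc (f := i) (g := g) p 0 (by rw [w, comp_zero]), reassoc_of% hv]
    exact hs⟩

end Ext1

section Disk

lemma disk_X_eq {n i : ℤ} (A : 𝒜) (h : i = n ∨ i = n - 1) : (disk n A).X i = A :=
  if_pos h

lemma isZero_disk_X {n i : ℤ} (A : 𝒜) (h : ¬(i = n ∨ i = n - 1)) : IsZero ((disk n A).X i) := by
  dsimp only [disk]
  rw [if_neg h]
  exact isZero_zero 𝒜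

lemma disk_d (n : ℤ) (A : 𝒜) (i j : ℤ) : (disk n A).d i j =
    if h : i = n ∧ j = n - 1 then
      eqToHom ((disk_X_eq A (Or.inl h.1)).trans (disk_X_eq A (Or.inr h.2)).symm)
    else 0 := rfl

noncomputable def diskMap (n : ℤ) {A B : 𝒜} (φ : A ⟶ B) : disk n A ⟶ disk n B where
  f i := if h : i = n ∨ i = n - 1 then
    eqToHom (disk_X_eq A h) ≫ φ ≫ eqToHom (disk_X_eq B h).symm else 0
  comm' i j _ := by
    rw [disk_d, disk_d]
    by_cases h : i = n ∧ j = n - 1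
    · obtain ⟨rfl, rfl⟩ := h
      simp
    · rw [dif_neg h, dif_neg h, comp_zero, zero_comp]

lemma diskMap_f {n i : ℤ} {A B : 𝒜} (φ : A ⟶ B) (h : i = n ∨ i = n - 1) :
    (diskMap n φ).f i = eqToHom (disk_X_eq A h) ≫ φ ≫ eqToHom (disk_X_eq B h).symm :=
  dif_pos h

lemma diskMap_comp_diskMap_eq_zero (n : ℤ) {A B Q : 𝒜} {f : A ⟶ B} {g : B ⟶ Q}
    (w : f ≫ g = 0) : diskMap n f ≫ diskMap n g = 0 := by
  ext i
  by_cases h : i = n ∨ i = n - 1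
  · simp [diskMap_f _ h, reassoc_of% w]
  · exact (isZero_disk_X A h).eq_of_src _ _

lemma shortExact_diskMap (n : ℤ) {A B Q : 𝒜} {f : A ⟶ B} {g : B ⟶ Q} {w : f ≫ g = 0}
    (hse : (ShortComplex.mk f g w).ShortExact) :
    (ShortComplex.mk (diskMap n f) (diskMap n g)
      (diskMap_comp_diskMap_eq_zero n w)).ShortExact := by
  refine HomologicalComplex.shortExact_of_degreewise_shortExact _ fun i => ?_
  by_cases h : i = n ∨ i = n - 1
  · refine ShortComplex.shortExact_of_iso (ShortComplex.isoMk (eqToIso (disk_X_eq A h).symm)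
      (eqToIso (disk_X_eq B h).symm) (eqToIso (disk_X_eq Q h).symm) ?_ ?_) hse
    · change eqToHom (disk_X_eq A h).symm ≫ (diskMap n f).f i = f ≫ eqToHom (disk_X_eq B h).symm
      simp [diskMap_f f h]
    · change eqToHom (disk_X_eq B h).symm ≫ (diskMap n g).f i = g ≫ eqToHom (disk_X_eq Q h).symm
      simp [diskMap_f g h]
  · refine ShortComplex.ShortExact.mk' (ShortComplex.exact_of_isZero_X₂ _ (isZero_disk_X B h))
      ⟨fun _ _ _ => (isZero_disk_X A h).eq_of_tgt _ _⟩
      ⟨fun _ _ _ => (isZero_disk_X Q h).eq_of_src _ _⟩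

/-- The unit of the adjunction between evaluation in degree `n` and `disk (n + 1)`. -/
noncomputable def toDisk (X : ChainComplex 𝒜 ℤ) (n : ℤ) : X ⟶ disk (n + 1) (X.X n) where
  f i :=
    if h : i = n + 1 then
      X.d i n ≫ eqToHom (disk_X_eq (X.X n) (Or.inl h)).symm
    else if h' : i = n then
      eqToHom ((congrArg X.X h').trans (disk_X_eq (X.X n) (Or.inr (by omega))).symm)
    else 0
  comm' i j hij := by
    simp only [ComplexShape.down_Rel] at hij
    subst hij
    rw [disk_d]
    split_ifs <;> first | omega | (subst_vars; simp)

lemma toDisk_f_self (X : ChainComplex 𝒜 ℤ) (n : ℤ) :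
    (toDisk X n).f n = eqToHom (disk_X_eq (X.X n) (Or.inr (by omega))).symm := by
  simp [toDisk]

theorem Ext1IsZero.of_disk {X : ChainComplex 𝒜 ℤ} {c : 𝒜} {n : ℤ}
    (hd : Ext1IsZero X (disk (n + 1) c)) : Ext1IsZero (X.X n) c := by
  intro M i p w hse
  have hn : n = n + 1 ∨ n = n + 1 - 1 := Or.inr (by omega)
  obtain ⟨v, hv⟩ := hd.exists_lift (shortExact_diskMap (n + 1) hse) (toDisk X n)
  refine ⟨v.f n ≫ eqToHom (disk_X_eq M hn), ?_⟩
  have hvn := congrArg (fun φ => HomologicalComplex.Hom.f φ n) hv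
  simp only [HomologicalComplex.comp_f, diskMap_f p hn, toDisk_f_self] at hvn
  simpa using hvn =≫ eqToHom (disk_X_eq (X.X n) hn)

end Disk

section Cycles

variable (W : ChainComplex 𝒜 ℤ)

lemma iCycles_comp_toCycles (n : ℤ) : W.iCycles n ≫ W.toCycles n (n - 1) = 0 := by
  rw [← cancel_mono (W.iCycles (n - 1)), Category.assoc, HomologicalComplex.toCycles_i,
    HomologicalComplex.iCycles_d, zero_comp]

lemma shortExact_cycles {n : ℤ} (hex : W.ExactAt (n - 1)) :
    (ShortComplex.mk (W.iCycles n) (W.toCycles n (n - 1))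
      (iCycles_comp_toCycles W n)).ShortExact := by
  have hprev : (ComplexShape.down ℤ).prev (n - 1) = n :=
    (ComplexShape.down ℤ).prev_eq' (by simp only [ComplexShape.down_Rel]; omega)
  have hnext : (ComplexShape.down ℤ).next n = n - 1 :=
    (ComplexShape.down ℤ).next_eq' (by simp only [ComplexShape.down_Rel]; omega)
  have : Epi (W.toCycles n (n - 1)) := Preadditive.epi_of_isZero_cokernel' _
    (W.homologyIsCokernel n (n - 1) hprev) (hex.isZero_homology)
  refine ShortComplex.ShortExact.mk' (ShortComplex.exact_of_f_is_kernel _ ?_) inferInstance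
    inferInstance
  refine KernelFork.IsLimit.ofι' _ _ fun {T} k (hk : k ≫ W.toCycles n (n - 1) = 0) => ?_
  have hkd : k ≫ W.d n (n - 1) = 0 := by
    rw [← W.toCycles_i n (n - 1), reassoc_of% hk, zero_comp]
  exact ⟨W.liftCycles k (n - 1) hnext hkd, W.liftCycles_i _ _ _ _⟩

variable {W}

theorem Ext1IsZero.exists_comp_d_eq {A : 𝒜} {n : ℤ} (hA : Ext1IsZero A (W.cycles n))
    (hex : W.ExactAt (n - 1)) {u : A ⟶ W.X (n - 1)} (hu : u ≫ W.d (n - 1) (n - 1 - 1) = 0) :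
    ∃ φ : A ⟶ W.X n, φ ≫ W.d n (n - 1) = u := by
  have hnext : (ComplexShape.down ℤ).next (n - 1) = n - 1 - 1 :=
    (ComplexShape.down ℤ).next_eq' (by simp only [ComplexShape.down_Rel]; omega)
  obtain ⟨v, hv⟩ := hA.exists_lift (shortExact_cycles W hex) (W.liftCycles u _ hnext hu)
  exact ⟨v, by rw [← W.toCycles_i n (n - 1), ← Category.assoc, hv, W.liftCycles_i]⟩

end Cycles

section Homotopy

variable {𝒞 : Type u} [Category.{v} 𝒞] [Preadditive 𝒞] {X W Z : ChainComplex 𝒞 ℤ}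

noncomputable def homotopyRec (N : ℤ) (τ : ∀ n, X.X n ⟶ W.X (n - 1))
    (lift : ∀ n, (X.X n ⟶ W.X (n - 1)) → (X.X n ⟶ W.X n)) (n : ℤ) : X.X n ⟶ W.X n :=
  if n ≤ N then 0 else lift n (X.d n (n - 1) ≫ homotopyRec N τ lift (n - 1) - τ n)
termination_by (n - N).toNat

lemma homotopyRec_of_lt {N n : ℤ} (τ : ∀ n, X.X n ⟶ W.X (n - 1))
    (lift : ∀ n, (X.X n ⟶ W.X (n - 1)) → (X.X n ⟶ W.X n)) (hn : N < n) :
    homotopyRec N τ lift n = lift n (X.d n (n - 1) ≫ homotopyRec N τ lift (n - 1) - τ n) := by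
  rw [homotopyRec, if_neg (not_le.2 hn)]

lemma homotopyRec_comp_d {N : ℤ} (hW : ∀ n < N, IsZero (W.X n)) {τ : ∀ n, X.X n ⟶ W.X (n - 1)}
    (hτ : ∀ n, τ n ≫ W.d (n - 1) (n - 1 - 1) = -(X.d n (n - 1) ≫ τ (n - 1)))
    {lift : ∀ n, (X.X n ⟶ W.X (n - 1)) → (X.X n ⟶ W.X n)}
    (hlift : ∀ n u, u ≫ W.d (n - 1) (n - 1 - 1) = 0 → lift n u ≫ W.d n (n - 1) = u) (n : ℤ) :
    homotopyRec N τ lift n ≫ W.d n (n - 1) =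
      X.d n (n - 1) ≫ homotopyRec N τ lift (n - 1) - τ n := by
  set h := homotopyRec N τ lift
  suffices ∀ k : ℕ, ∀ n ≤ N + k, h n ≫ W.d n (n - 1) = X.d n (n - 1) ≫ h (n - 1) - τ n from
    this (n - N).toNat n (by omega)
  intro k
  induction k with
  | zero => exact fun n hn => (hW (n - 1) (by omega)).eq_of_tgt _ _
  | succ k ih =>
    intro n hn
    rcases le_or_gt n (N + k) with hn' | hn'
    · exact ih n hn'
    have hcycle : (X.d n (n - 1) ≫ h (n - 1) - τ n) ≫ W.d (n - 1) (n - 1 - 1) = 0 := by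
      rw [Preadditive.sub_comp, Category.assoc, ih (n - 1) (by omega), hτ n,
        Preadditive.comp_sub, X.d_comp_d_assoc, zero_comp, zero_sub, sub_neg_eq_add,
        neg_add_cancel]
    rw [show h n = _ from homotopyRec_of_lt τ lift (by omega : N < n)]
    exact hlift n _ hcycle

theorem exists_homotopy_of_isZero_of_lt {N : ℤ} (hW : ∀ n < N, IsZero (W.X n))
    (hlift : ∀ n (u : X.X n ⟶ W.X (n - 1)), u ≫ W.d (n - 1) (n - 1 - 1) = 0 →
      ∃ φ : X.X n ⟶ W.X n, φ ≫ W.d n (n - 1) = u)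
    {τ : ∀ n, X.X n ⟶ W.X (n - 1)}
    (hτ : ∀ n, τ n ≫ W.d (n - 1) (n - 1 - 1) = -(X.d n (n - 1) ≫ τ (n - 1))) :
    ∃ h : ∀ n, X.X n ⟶ W.X n,
      ∀ n, h n ≫ W.d n (n - 1) = X.d n (n - 1) ≫ h (n - 1) - τ n := by
  classical
  choose lift hlift' using fun n (u : X.X n ⟶ W.X (n - 1)) =>
    if hu : u ≫ W.d (n - 1) (n - 1 - 1) = 0 then (hlift n u hu).imp fun _ h _ => h
    else ⟨0, fun hu' => absurd hu' hu⟩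
  exact ⟨homotopyRec N τ lift, homotopyRec_comp_d hW hτ hlift'⟩

lemma comp_d_eq_neg_d_comp {i : W ⟶ Z} (hi : ∀ n, Mono (i.f n)) {σ : ∀ n, X.X n ⟶ Z.X n}
    {τ : ∀ n, X.X n ⟶ W.X (n - 1)}
    (hτ : ∀ n, τ n ≫ i.f (n - 1) = X.d n (n - 1) ≫ σ (n - 1) - σ n ≫ Z.d n (n - 1)) (n : ℤ) :
    τ n ≫ W.d (n - 1) (n - 1 - 1) = -(X.d n (n - 1) ≫ τ (n - 1)) := by
  rw [← cancel_mono (i.f (n - 1 - 1)), Category.assoc, ← i.comm, reassoc_of% (hτ n),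
    Preadditive.neg_comp, Category.assoc, hτ (n - 1)]
  simp only [Preadditive.sub_comp, Preadditive.comp_sub, Category.assoc,
    HomologicalComplex.d_comp_d, HomologicalComplex.d_comp_d_assoc, comp_zero, zero_comp,
    sub_zero, zero_sub, neg_neg]

end Homotopy

section Splitting

variable {X W Z : ChainComplex 𝒜 ℤ}

lemma exists_comp_f_eq_d_comp_sub_comp_d {i : W ⟶ Z} {p : Z ⟶ X} {w : i ≫ p = 0}
    (hse : (ShortComplex.mk i p w).ShortExact) {σ : ∀ n, X.X n ⟶ Z.X n}
    (hσ : ∀ n, σ n ≫ p.f n = 𝟙 (X.X n)) (n : ℤ) :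
    ∃ τ : X.X n ⟶ W.X (n - 1),
      τ ≫ i.f (n - 1) = X.d n (n - 1) ≫ σ (n - 1) - σ n ≫ Z.d n (n - 1) := by
  have hker := (hse.map_of_exact (HomologicalComplex.eval 𝒜 _ (n - 1))).fIsKernel
  have hzero : (X.d n (n - 1) ≫ σ (n - 1) - σ n ≫ Z.d n (n - 1)) ≫ p.f (n - 1) = 0 := by
    rw [Preadditive.sub_comp, Category.assoc, hσ, Category.comp_id, Category.assoc, ← p.comm,
      reassoc_of% hσ, sub_self]
  exact ⟨hker.lift (KernelFork.ofι _ hzero), Fork.IsLimit.lift_ι hker⟩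

theorem Ext1IsZero.of_degreewise {N : ℤ} (hdeg : ∀ n, Ext1IsZero (X.X n) (W.X n))
    (hW : ∀ n < N, IsZero (W.X n))
    (hlift : ∀ n (u : X.X n ⟶ W.X (n - 1)), u ≫ W.d (n - 1) (n - 1 - 1) = 0 →
      ∃ φ : X.X n ⟶ W.X n, φ ≫ W.d n (n - 1) = u) :
    Ext1IsZero X W := by
  intro Z i p w hse
  have hse' (n : ℤ) : (ShortComplex.mk (i.f n) (p.f n)
      (by rw [← HomologicalComplex.comp_f, w, HomologicalComplex.zero_f])).ShortExact :=
    hse.map_of_exact (HomologicalComplex.eval 𝒜 _ n)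
  choose σ hσ using fun n => hdeg n _ _ _ _ (hse' n)
  choose τ hτ using exists_comp_f_eq_d_comp_sub_comp_d hse hσ
  obtain ⟨h, hh⟩ :=
    exists_homotopy_of_isZero_of_lt hW hlift (comp_d_eq_neg_d_comp (fun n => (hse' n).mono_f) hτ)
  refine ⟨{ f := fun n => σ n - h n ≫ i.f n, comm' := ?_ }, ?_⟩
  · rintro a b (hab : b + 1 = a)
    obtain rfl : b = a - 1 := by omega
    rw [Preadditive.sub_comp, Category.assoc, i.comm, reassoc_of% (hh a), Preadditive.sub_comp,
      Category.assoc, hτ a, Preadditive.comp_sub]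
    abel
  · ext n
    change (σ n - h n ≫ i.f n) ≫ p.f n = 𝟙 _
    rw [Preadditive.sub_comp, hσ, Category.assoc, ← HomologicalComplex.comp_f, w,
      HomologicalComplex.zero_f, comp_zero, sub_zero]

end Splitting

theorem bounded_below_exact_cycles_in_right_half_general {G : Type u} [Category.{v} G] [Abelian G]
    (XX YY : Set (ChainComplex G ℤ)) (hcp : IsCotorsionPair XX YY) (C : Set G)
    (hdisks : ∀ c ∈ C, ∀ n : ℤ, disk n c ∈ YY)
    (W : ChainComplex G ℤ) (hbdd : ∃ N : ℤ, ∀ n : ℤ, n < N → IsZero (W.X n))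
    (hexact : ∀ n : ℤ, W.ExactAt n) (hcycles : ∀ n : ℤ, W.cycles n ∈ C) :
    W ∈ YY := by
  obtain ⟨N, hN⟩ := hbdd
  rw [hcp.1] at hdisks ⊢
  intro X hX
  have hXC (m : ℤ) (c : G) (hc : c ∈ C) : Ext1IsZero (X.X m) c :=
    Ext1IsZero.of_disk (hdisks c hc (m + 1) X hX)
  refine Ext1IsZero.of_degreewise (fun n => ?_) hN fun n u hu => ?_
  · exact Ext1IsZero.of_shortExact (shortExact_cycles W (hexact (n - 1)))
      (hXC n _ (hcycles n)) (hXC n _ (hcycles (n - 1)))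
  · exact (hXC n _ (hcycles n)).exists_comp_d_eq (hexact (n - 1)) hu

/-- In a Grothendieck category with a projective generator, if all disks
on objects of `C` lie in the right half `YY` of a cotorsion pair on `Ch(G)`, then
every bounded below exact complex with cycles in `C` lies in `YY`. -/
theorem bounded_below_exact_cycles_in_right_half {G : Type u} [Category.{v} G] [Abelian G]
    [HasColimits G] [AB5 G] (P : G) (hproj : Projective P) (hgen : IsSeparator P)
    (XX YY : Set (ChainComplex G ℤ)) (hcp : IsCotorsionPair XX YY) (C : Set G)
    (hdisks : ∀ c ∈ C, ∀ n : ℤ, disk n c ∈ YY)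
    (W : ChainComplex G ℤ) (hbdd : ∃ N : ℤ, ∀ n : ℤ, n < N → IsZero (W.X n))
    (hexact : ∀ n : ℤ, W.ExactAt n) (hcycles : ∀ n : ℤ, W.cycles n ∈ C) :
    W ∈ YY :=
  bounded_below_exact_cycles_in_right_half_general XX YY hcp C hdisks W hbdd hexact hcycles

end GorensteinAC
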